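/- If in the sorted (nondecreasing) sequence of endpoint levels of a (kn,n)-Dyck path, position i is a west endpoint (of an east step) with level mn and position i+1 is a south endpoint (of a north step), then position i+1 also has level mn. -/

import Mathlib

/-- Steps of a path: `true` = north step, `false` = east step.
The level of the lattice point reached after the steps `p`:
each north step adds `k*n`, each east step subtracts `n`. -/
def level (k n : ℕ) (p : List Bool) : ℤ :=
  (k * n : ℤ) * p.count true - (n : ℤ) * p.count false

/-- A `(kn,n)`-Dyck path: `n` north steps, `k*n` east steps, all prefix levels nonnegative. -/
def IsDyck (k n : ℕ) (p : List Bool) : Prop :=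
  p.count true = n ∧ p.count false = k * n ∧ ∀ i ≤ p.length, 0 ≤ level k n (p.take i)

/-- The sweep map: label each step by the level of its starting endpoint
(south endpoint for north steps, west endpoint for east steps), sweep the path
from right to left, and stably sort the labeled steps in nondecreasing order of level.
Entries are pairs `(τᵢ, σᵢ)` with `σᵢ = true` meaning `S` and `σᵢ = false` meaning `W`. -/
def sweep (k n : ℕ) (p : List Bool) : List (ℤ × Bool) :=
  ((List.range p.length).reverse.map fun i => (level k n (p.take i), p.getD i true)).mergeSort
    fun a b => decide (a.1 ≤ b.1)

/-- The S/W word output by the sweep map. -/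
def sweepWord (k n : ℕ) (p : List Bool) : List Bool :=
  (sweep k n p).map Prod.snd

/-! The sweep is sorted, so `m n ≤ τᵢ₊₁`. If the inequality were strict, entry `i + 1` would be the
first entry of the sweep at level `w := τᵢ₊₁ > m n ≥ 0`. Merge sort is stable and the sweep reads
the path from right to left, so this entry comes from the rightmost step starting at level `w`.
That step cannot be north: all levels lie in `n ℤ` and each step changes the level by `+k n` or
`-n`, so after a north step the path could not get down to its final level `0 < w` without
passing through `w` again. Hence entry `i + 1` is a `W`, not an `S`. -/

namespace List

variable {α : Type*} (f : α → ℤ) (w : ℤ) (l : List α)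

theorem filter_mergeSort_key_eq :
    (l.mergeSort fun a b => decide (f a ≤ f b)).filter (fun a => f a = w) =
      l.filter (fun a => f a = w) := by
  set le : α → α → Bool := fun a b => decide (f a ≤ f b)
  have trans : ∀ a b c, le a b → le b c → le a c := by
    simp only [le, decide_eq_true_eq]; exact fun _ _ _ => le_trans
  have total : ∀ a b, (le a b || le b a) = true := by
    simpa [le] using fun a b => le_total (f a) (f b)
  have hpw : (l.filter fun a => f a = w).Pairwise (le · ·) :=
    pairwise_of_forall_mem_list fun a ha b hb => by
      simp_all [le, mem_filter]
  have hsub := (sublist_mergeSort trans total hpw filter_sublist).filter (fun a => decide (f a = w))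
  rw [filter_filter, filter_congr (fun a _ => Bool.and_self _)] at hsub
  exact (hsub.eq_of_length ((mergeSort_perm l le).filter _).length_eq.symm).symm

theorem find?_mergeSort_key_eq :
    (l.mergeSort fun a b => decide (f a ≤ f b)).find? (fun a => f a = w) =
      l.find? (fun a => f a = w) := by
  rw [← head?_filter, ← head?_filter, filter_mergeSort_key_eq]

end List

section Level

variable {k n : ℕ}

theorem level_append_singleton (q : List Bool) (b : Bool) :
    level k n (q ++ [b]) = level k n q + if b then (k * n : ℤ) else -(n : ℤ) := by
  cases b <;> simp [level, List.count_append] <;> ring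

theorem level_take_succ (p : List Bool) {j : ℕ} (hj : j < p.length) :
    level k n (p.take (j + 1)) = level k n (p.take j) + if p[j] then (k * n : ℤ) else -(n : ℤ) := by
  rw [← List.take_concat_get' p j hj, level_append_singleton]

theorem dvd_level (q : List Bool) : (n : ℤ) ∣ level k n q :=
  ⟨k * q.count true - q.count false, by unfold level; ring⟩

theorem IsDyck.level_eq_zero {p : List Bool} (hp : IsDyck k n p) : level k n p = 0 := by
  simp [level, hp.1, hp.2.1]; ring

theorem exists_level_take_eq_of_le_of_lt {p : List Bool} {w : ℤ} (hw : (n : ℤ) ∣ w) {a b : ℕ}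
    (hab : a ≤ b) (hb : b ≤ p.length) (ha : w ≤ level k n (p.take a))
    (hbw : level k n (p.take b) < w) : ∃ s, a ≤ s ∧ s < b ∧ level k n (p.take s) = w := by
  induction b, hab using Nat.le_induction with
  | base => exact absurd ha (not_le.2 hbw)
  | succ b hab ih =>
    by_cases hlt : level k n (p.take b) < w
    · obtain ⟨s, has, hsb, hs⟩ := ih (by omega) hlt
      exact ⟨s, has, by omega, hs⟩
    refine ⟨b, hab, by omega, ?_⟩
    have hstep := level_take_succ (k := k) (n := n) p (j := b) (by omega)
    cases hpb : p[b]
    · simp only [hpb, Bool.false_eq_true, if_false] at hstep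
      have hdvd : (n : ℤ) ∣ level k n (p.take b) - w := dvd_sub (dvd_level _) hw
      have := Int.eq_zero_of_dvd_of_nonneg_of_lt (by omega) (by omega) hdvd
      omega
    · simp only [hpb, if_true] at hstep
      have : (0 : ℤ) ≤ k * n := by positivity
      omega

theorem exists_level_take_eq_of_getElem_eq_true {p : List Bool} {j : ℕ} (hj : j < p.length)
    (hnorth : p[j] = true) (hend : level k n p < level k n (p.take j)) :
    ∃ s, j < s ∧ s < p.length ∧ level k n (p.take s) = level k n (p.take j) := by
  have hup : level k n (p.take j) ≤ level k n (p.take (j + 1)) := by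
    rw [level_take_succ p hj, hnorth, if_pos rfl]
    have : (0 : ℤ) ≤ k * n := by positivity
    omega
  obtain ⟨s, hjs, hs, hlev⟩ := exists_level_take_eq_of_le_of_lt (dvd_level _) (by omega) le_rfl hup
    (by rwa [List.take_length])
  exact ⟨s, by omega, hs, hlev⟩

end Level

section Sweep

variable (k n : ℕ) (p : List Bool)

theorem pairwise_sweep : (sweep k n p).Pairwise fun a b => a.1 ≤ b.1 :=
  (List.pairwise_mergeSort (fun _ _ _ h₁ h₂ => by simp_all only [decide_eq_true_eq]; omega)
    (fun a b => by simpa using le_total a.1 b.1) _).imp of_decide_eq_true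

theorem mem_sweep {e : ℤ × Bool} (he : e ∈ sweep k n p) :
    ∃ j, ∃ hj : j < p.length, e = (level k n (p.take j), p[j]) := by
  obtain ⟨j, hj, rfl⟩ := List.mem_map.1 ((List.mergeSort_perm _ _).mem_iff.1 he)
  rw [List.mem_reverse, List.mem_range] at hj
  exact ⟨j, hj, by rw [List.getD_eq_getElem _ _ hj]⟩

theorem exists_of_find?_sweep_eq_some {w : ℤ} {e : ℤ × Bool}
    (he : (sweep k n p).find? (fun a => a.1 = w) = some e) :
    ∃ J, ∃ hJ : J < p.length, e = (w, p[J]) ∧ level k n (p.take J) = w ∧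
      ∀ j, J < j → j < p.length → level k n (p.take j) ≠ w := by
  unfold sweep at he
  rw [List.find?_mergeSort_key_eq Prod.fst, List.find?_map, Option.map_eq_some_iff] at he
  obtain ⟨J, hfind, rfl⟩ := he
  obtain ⟨hJw, q, hq, hqJ, hbefore⟩ := List.find?_eq_some_iff_getElem.1 hfind
  simp only [List.length_reverse, List.length_range] at hq
  simp only [List.getElem_reverse, List.getElem_range, List.length_range] at hqJ
  have hJ : J < p.length := by omega
  simp only [Function.comp_apply, decide_eq_true_eq] at hJw
  refine ⟨J, hJ, by rw [hJw, List.getD_eq_getElem _ _ hJ], hJw, fun j hJj hj hjw => ?_⟩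
  have := hbefore (p.length - 1 - j) (by omega)
  simp only [List.getElem_reverse, List.getElem_range, List.length_range, Function.comp_apply] at this
  rw [show p.length - 1 - (p.length - 1 - j) = j by omega] at this
  simp [hjw] at this

end Sweep

theorem IsDyck.find?_sweep_eq_some_snd_eq_false {k n : ℕ} {p : List Bool} (hp : IsDyck k n p)
    {w : ℤ} (hw : 0 < w) {e : ℤ × Bool}
    (he : (sweep k n p).find? (fun a => a.1 = w) = some e) : e.2 = false := by
  obtain ⟨J, hJ, rfl, hJw, hlast⟩ := exists_of_find?_sweep_eq_some k n p he
  by_contra hnorth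
  obtain ⟨s, hJs, hs, hsw⟩ := exists_level_take_eq_of_getElem_eq_true hJ
    (Bool.not_eq_false _ ▸ hnorth) (by rw [hp.level_eq_zero, hJw]; exact hw)
  exact hlast s hJs hs (hsw.trans hJw)

theorem stmt3_general (k n : ℕ) (p : List Bool) (hp : IsDyck k n p)
    (m : ℤ) (i : ℕ) (hi : i + 1 < (sweep k n p).length)
    (hW : (sweep k n p).getD i (0, true) = (m * n, false))
    (hS : ((sweep k n p).getD (i + 1) (0, true)).2 = true) :
    ((sweep k n p).getD (i + 1) (0, true)).1 = m * n := by
  have hsorted := List.pairwise_iff_getElem.1 (pairwise_sweep k n p)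
  set s := sweep k n p
  rw [List.getD_eq_getElem _ _ hi] at hS ⊢
  rw [List.getD_eq_getElem _ _ (by omega)] at hW
  have hle : ∀ q (hq : q ≤ i), s[q].1 ≤ m * n := fun q hq => by
    rcases hq.lt_or_eq with hq | rfl
    · simpa [hW] using hsorted q i (by omega) (by omega) hq
    · simp [hW]
  refine le_antisymm ?_ (by simpa [hW] using hsorted i (i + 1) (by omega) hi (by omega))
  by_contra! hlt
  have hmn : 0 ≤ m * n := by
    obtain ⟨j, hj, he⟩ := mem_sweep k n p (hW ▸ List.getElem_mem (by omega))
    rw [show m * n = _ from congrArg Prod.fst he]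
    exact hp.2.2 j hj.le
  have hfirst : s.find? (fun a => a.1 = s[i + 1].1) = some s[i + 1] := by
    refine List.find?_eq_some_iff_getElem.2 ⟨by simp, i + 1, hi, rfl, fun j hj => ?_⟩
    have := hle j (by omega)
    simp only [Bool.not_eq_true', decide_eq_false_iff_not]
    omega
  simp [hp.find?_sweep_eq_some_snd_eq_false (by omega) hfirst] at hS

/-- Theorem 2.1 (first part): in the sorted sweep-map output of a `(kn,n)`-Dyck path,
if position `i` is a `W` with level `m·n` and position `i+1` is an `S`,
then position `i+1` also has level `m·n`. -/
theorem stmt3 (k n : ℕ) (hn : 0 < n) (p : List Bool) (hp : IsDyck k n p)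
    (m : ℤ) (i : ℕ) (hi : i + 1 < (sweep k n p).length)
    (hW : (sweep k n p).getD i (0, true) = (m * n, false))
    (hS : ((sweep k n p).getD (i + 1) (0, true)).2 = true) :
    ((sweep k n p).getD (i + 1) (0, true)).1 = m * n :=
  stmt3_general k n p hp m i hi hW hS
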